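/- Suppose Δ satisfies truncation, and suppose there exist r₀ ∈ ℤ and p₀ ∈ ℤ such that the Co-Borcherds identity holds at (p, q, r₀) for all p, q ∈ ℤ and at (p₀, q, r) for all q, r ∈ ℤ. Then the Co-Borcherds identity holds at (p, q, r) for all p, q, r ∈ ℤ. -/
import Mathlib


open TensorProduct

noncomputable section

/-- Generalized binomial coefficient `C(p,i) = p(p-1)⋯(p-i+1)/i!` as a complex number. -/
def cbin (p : ℤ) (i : ℕ) : ℂ :=
  (∏ k ∈ Finset.range i, ((p : ℂ) - (k : ℂ))) / (i.factorial : ℂ)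

variable {V : Type*} [AddCommGroup V] [Module ℂ V]

/-- The flip `T` on `V ⊗ V`, `T (u ⊗ w) = w ⊗ u`. -/
def Tflip : V ⊗[ℂ] V →ₗ[ℂ] V ⊗[ℂ] V := (TensorProduct.comm ℂ V V).toLinearMap

/-- `T ⊗ Id` acting on `V ⊗ (V ⊗ V)` (conjugated by the associator). -/
def TId : (V ⊗[ℂ] (V ⊗[ℂ] V)) →ₗ[ℂ] (V ⊗[ℂ] (V ⊗[ℂ] V)) :=
  (TensorProduct.assoc ℂ V V V).toLinearMap ∘ₗ
    (TensorProduct.map Tflip LinearMap.id) ∘ₗ (TensorProduct.assoc ℂ V V V).symm.toLinearMap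

/-- `(Δₙ ⊗ Id) ∘ Δₘ` as a map `V → V ⊗ (V ⊗ V)` (via the associator). -/
def DL (Δ : ℤ → V →ₗ[ℂ] V ⊗[ℂ] V) (n m : ℤ) : V →ₗ[ℂ] (V ⊗[ℂ] (V ⊗[ℂ] V)) :=
  (TensorProduct.assoc ℂ V V V).toLinearMap ∘ₗ (TensorProduct.map (Δ n) LinearMap.id) ∘ₗ Δ m

/-- `(Id ⊗ Δₙ) ∘ Δₘ` as a map `V → V ⊗ (V ⊗ V)`. -/
def DR (Δ : ℤ → V →ₗ[ℂ] V ⊗[ℂ] V) (n m : ℤ) : V →ₗ[ℂ] (V ⊗[ℂ] (V ⊗[ℂ] V)) :=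
  (TensorProduct.map LinearMap.id (Δ n)) ∘ₗ Δ m

/-- Truncation: for each `v` there is `N` with `Δₙ v = 0` for all `n ≤ N`. -/
def Truncation (Δ : ℤ → V →ₗ[ℂ] V ⊗[ℂ] V) : Prop :=
  ∀ v : V, ∃ N : ℤ, ∀ n ≤ N, Δ n v = 0

/-- `(Id ⊗ c)` composed with the canonical identification `V ⊗ ℂ ≅ V`. -/
def IdC (c : V →ₗ[ℂ] ℂ) : (V ⊗[ℂ] V) →ₗ[ℂ] V :=
  (TensorProduct.rid ℂ V).toLinearMap ∘ₗ TensorProduct.map LinearMap.id c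

/-- `(c ⊗ Id)` composed with the canonical identification `ℂ ⊗ V ≅ V`. -/
def CId (c : V →ₗ[ℂ] ℂ) : (V ⊗[ℂ] V) →ₗ[ℂ] V :=
  (TensorProduct.lid ℂ V).toLinearMap ∘ₗ TensorProduct.map c LinearMap.id

/-- Divided power `D*^{(i)} = (D*)^i / i!`. -/
def dpow (D : V →ₗ[ℂ] V) (i : ℕ) : V →ₗ[ℂ] V := ((i.factorial : ℂ)⁻¹) • (D ^ i)

/-- The Co-Borcherds identity at `(p,q,r)`. -/
def CoBorcherds (Δ : ℤ → V →ₗ[ℂ] V ⊗[ℂ] V) (p q r : ℤ) : Prop :=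
  ∀ v : V,
    (∑ᶠ i : ℕ, cbin p i • DL Δ (r + i) (p + q - i) v) =
      ∑ᶠ i : ℕ, ((-1 : ℂ) ^ i * cbin r i) •
        (DR Δ (q + i) (p + r - i) v - (-1 : ℂ) ^ r • TId (DR Δ (p + i) (q + r - i) v))

/-- Left counit: `(c ⊗ Id) ∘ Δₙ` is the identity for `n = -1` and zero otherwise. -/
def LeftCounit (Δ : ℤ → V →ₗ[ℂ] V ⊗[ℂ] V) (c : V →ₗ[ℂ] ℂ) : Prop :=
  CId c ∘ₗ Δ (-1) = LinearMap.id ∧ ∀ n : ℤ, n ≠ -1 → CId c ∘ₗ Δ n = 0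

/-- Cocreation: `(Id ⊗ c) ∘ Δₙ = 0` for `n ≥ 0` and `(Id ⊗ c) ∘ Δ₋₁ = Id`. -/
def Cocreation (Δ : ℤ → V →ₗ[ℂ] V ⊗[ℂ] V) (c : V →ₗ[ℂ] ℂ) : Prop :=
  (∀ n : ℤ, 0 ≤ n → IdC c ∘ₗ Δ n = 0) ∧ IdC c ∘ₗ Δ (-1) = LinearMap.id

/-- Exponential cocreation: `(Id ⊗ c) ∘ Δ₋₁₋ᵢ = D*^{(i)}` for all `i ≥ 0`,
and `(Id ⊗ c) ∘ Δₙ = 0` for all `n ≥ 0`. -/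
def ExpCocreation (Δ : ℤ → V →ₗ[ℂ] V ⊗[ℂ] V) (c : V →ₗ[ℂ] ℂ) (D : V →ₗ[ℂ] V) : Prop :=
  (∀ i : ℕ, IdC c ∘ₗ Δ (-1 - i) = dpow D i) ∧ ∀ n : ℤ, 0 ≤ n → IdC c ∘ₗ Δ n = 0

/-- The `D*` formula: `(D* ⊗ Id) ∘ Δ_q = -q • Δ_{q-1}`. -/
def DstFormula (Δ : ℤ → V →ₗ[ℂ] V ⊗[ℂ] V) (D : V →ₗ[ℂ] V) : Prop :=
  ∀ q : ℤ, TensorProduct.map D LinearMap.id ∘ₗ Δ q = (-(q : ℂ)) • Δ (q - 1)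

/-- Coefficient Co-Skew symmetry. -/
def CoSkew (Δ : ℤ → V →ₗ[ℂ] V ⊗[ℂ] V) (D : V →ₗ[ℂ] V) : Prop :=
  ∀ (r : ℤ) (v : V),
    {i : ℕ | Δ (r + i) (dpow D i v) ≠ 0}.Finite ∧
    Tflip (Δ r v) = ∑ᶠ i : ℕ, (-1 : ℂ) ^ (r + 1 + (i : ℤ)) • Δ (r + i) (dpow D i v)

/-- Coefficient Co-Commutator formula at `(p,q)`. -/
def CoCommutator (Δ : ℤ → V →ₗ[ℂ] V ⊗[ℂ] V) (p q : ℤ) : Prop :=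
  ∀ v : V,
    (∑ᶠ i : ℕ, cbin p i • DL Δ (i : ℤ) (p + q - i) v) = DR Δ q p v - TId (DR Δ p q v)

/-- Coefficient Co-Associator formula at `(q,r)`. -/
def CoAssociator (Δ : ℤ → V →ₗ[ℂ] V ⊗[ℂ] V) (q r : ℤ) : Prop :=
  ∀ v : V,
    DL Δ r q v =
      ∑ᶠ i : ℕ, ((-1 : ℂ) ^ i * cbin r i) •
        (DR Δ (q + i) (r - i) v - (-1 : ℂ) ^ r • TId (DR Δ (i : ℤ) (q + r - i) v))


section AuxProof

variable (Δ : ℤ → V →ₗ[ℂ] V ⊗[ℂ] V)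

lemma cbin_zero' (p : ℤ) : cbin p 0 = 1 := by simp [cbin]

lemma cbin_succ_succ (p : ℤ) (i : ℕ) :
    cbin (p + 1) (i + 1) = cbin p (i + 1) + cbin p i := by
  have hB : (∏ k ∈ Finset.range (i + 1), (((p : ℂ) + 1) - (k : ℂ)))
      = (∏ k ∈ Finset.range i, ((p : ℂ) - k)) * ((p : ℂ) + 1) := by
    rw [Finset.prod_range_succ']
    congr 1
    · exact Finset.prod_congr rfl fun k _ => by push_cast; ring
    · norm_num
  have hA : (∏ k ∈ Finset.range (i + 1), ((p : ℂ) - (k : ℂ)))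
      = (∏ k ∈ Finset.range i, ((p : ℂ) - k)) * ((p : ℂ) - i) :=
    Finset.prod_range_succ _ _
  have h1 : ((i : ℂ) + 1) ≠ 0 := by
    exact_mod_cast Nat.succ_ne_zero i
  have h2 : ((i.factorial : ℂ)) ≠ 0 := Nat.cast_ne_zero.2 i.factorial_ne_zero
  simp only [cbin, Nat.factorial_succ]
  push_cast
  rw [hB, hA]
  field_simp
  ring

private lemma finsum_eq_range {W : Type*} [AddCommMonoid W] (f : ℕ → W) (M : ℕ)
    (h : ∀ i, M ≤ i → f i = 0) : ∑ᶠ i, f i = ∑ i ∈ Finset.range M, f i := by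
  apply finsum_eq_sum_of_support_subset
  intro i hi
  simp only [Finset.coe_range, Set.mem_Iio]
  by_contra hc
  exact hi (h i (not_lt.mp hc))

private lemma gen_rec {W : Type*} [AddCommGroup W] [Module ℂ W]
    (a : ℤ → ℤ → W) (N : ℤ) (h0 : ∀ n m : ℤ, m ≤ N → a n m = 0)
    (ε : ℂ) (s x y : ℤ) :
    (∑ᶠ i : ℕ, (ε ^ i * cbin (s + 1) i) • a (x + i) (y + 1 - i))
      = (∑ᶠ i : ℕ, (ε ^ i * cbin s i) • a (x + i) (y + 1 - i))
        + ε • ∑ᶠ i : ℕ, (ε ^ i * cbin s i) • a (x + 1 + i) (y - i) := by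
  set M : ℕ := (y + 1 - N).toNat with hMdef
  have hMge : y + 1 - N ≤ (M : ℤ) := Int.self_le_toNat _
  have hv1 : ∀ i : ℕ, M ≤ i → y + 1 - (i : ℤ) ≤ N := by
    intro i hi
    have : (M : ℤ) ≤ i := by exact_mod_cast hi
    omega
  have hv2 : ∀ i : ℕ, M ≤ i → y - (i : ℤ) ≤ N := by
    intro i hi
    have : (M : ℤ) ≤ i := by exact_mod_cast hi
    omega
  have eL : (∑ᶠ i : ℕ, (ε ^ i * cbin (s + 1) i) • a (x + i) (y + 1 - i))
      = ∑ i ∈ Finset.range (M + 1), (ε ^ i * cbin (s + 1) i) • a (x + i) (y + 1 - i) :=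
    finsum_eq_range _ _ (fun i hi => by rw [h0 _ _ (hv1 i (by omega)), smul_zero])
  have eR1 : (∑ᶠ i : ℕ, (ε ^ i * cbin s i) • a (x + i) (y + 1 - i))
      = ∑ i ∈ Finset.range (M + 1), (ε ^ i * cbin s i) • a (x + i) (y + 1 - i) :=
    finsum_eq_range _ _ (fun i hi => by rw [h0 _ _ (hv1 i (by omega)), smul_zero])
  have eR2 : (∑ᶠ i : ℕ, (ε ^ i * cbin s i) • a (x + 1 + i) (y - i))
      = ∑ i ∈ Finset.range (M + 1), (ε ^ i * cbin s i) • a (x + 1 + i) (y - i) :=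
    finsum_eq_range _ _ (fun i hi => by rw [h0 _ _ (hv2 i (by omega)), smul_zero])
  rw [eL, eR1, eR2]
  rw [Finset.sum_range_succ' (fun i => (ε ^ i * cbin (s + 1) i) • a (x + i) (y + 1 - i)) M,
    Finset.sum_range_succ' (fun i => (ε ^ i * cbin s i) • a (x + i) (y + 1 - i)) M,
    Finset.sum_range_succ (fun i => (ε ^ i * cbin s i) • a (x + 1 + i) (y - i)) M]
  have hlast : a (x + 1 + (M : ℤ)) (y - M) = 0 := h0 _ _ (by omega)
  rw [hlast, smul_zero, add_zero, Finset.smul_sum]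
  simp only [pow_zero, cbin_zero', one_mul, Nat.cast_zero, add_zero, sub_zero, one_smul]
  push_cast
  have e1 : ∀ z : ℤ, x + (z + 1) = x + 1 + z := fun z => by ring
  have e2 : ∀ z : ℤ, y + 1 - (z + 1) = y - z := fun z => by ring
  simp only [e1, e2]
  have hsum : (∑ i ∈ Finset.range M, (ε ^ (i + 1) * cbin (s + 1) (i + 1)) • a (x + 1 + i) (y - i))
      = (∑ i ∈ Finset.range M, (ε ^ (i + 1) * cbin s (i + 1)) • a (x + 1 + i) (y - i))
        + ∑ i ∈ Finset.range M, ε • ((ε ^ i * cbin s i) • a (x + 1 + i) (y - i)) := by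
    rw [← Finset.sum_add_distrib]
    apply Finset.sum_congr rfl
    intro i _
    rw [smul_smul, ← add_smul]
    congr 1
    rw [cbin_succ_succ]
    ring
  rw [hsum]
  abel

private def Lsum (p q r : ℤ) (v : V) : V ⊗[ℂ] (V ⊗[ℂ] V) :=
  ∑ᶠ i : ℕ, cbin p i • DL Δ (r + i) (p + q - i) v

private def Hsum (p q r : ℤ) (v : V) : V ⊗[ℂ] (V ⊗[ℂ] V) :=
  ∑ᶠ i : ℕ, ((-1 : ℂ) ^ i * cbin r i) • DR Δ (q + i) (p + r - i) v

private def Gsum (p q r : ℤ) (v : V) : V ⊗[ℂ] (V ⊗[ℂ] V) :=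
  (-1 : ℂ) ^ r • ∑ᶠ i : ℕ, ((-1 : ℂ) ^ i * cbin r i) • TId (DR Δ (p + i) (q + r - i) v)

private lemma hDR_zero (v : V) (N : ℤ) (hN : ∀ n ≤ N, Δ n v = 0) :
    ∀ n m : ℤ, m ≤ N → DR Δ n m v = 0 := fun n m hm => by
  simp [DR, hN m hm]

private lemma rhs_split (htr : Truncation Δ) (p q r : ℤ) (v : V) :
    (∑ᶠ i : ℕ, ((-1 : ℂ) ^ i * cbin r i) •
        (DR Δ (q + i) (p + r - i) v - (-1 : ℂ) ^ r • TId (DR Δ (p + i) (q + r - i) v)))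
      = Hsum Δ p q r v - Gsum Δ p q r v := by
  obtain ⟨N, hN⟩ := htr v
  have hDR := hDR_zero Δ v N hN
  set M : ℕ := (p + r - N).toNat + (q + r - N).toNat + 1 with hMdef
  have hle : ∀ i : ℕ, M ≤ i → (p + r - (i : ℤ) ≤ N ∧ q + r - (i : ℤ) ≤ N) := by
    intro i hi
    have h1 : (M : ℤ) ≤ (i : ℤ) := by exact_mod_cast hi
    rw [hMdef] at h1
    push_cast at h1
    omega
  have eA : (∑ᶠ i : ℕ, ((-1 : ℂ) ^ i * cbin r i) •
        (DR Δ (q + i) (p + r - i) v - (-1 : ℂ) ^ r • TId (DR Δ (p + i) (q + r - i) v)))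
      = ∑ i ∈ Finset.range M, ((-1 : ℂ) ^ i * cbin r i) •
        (DR Δ (q + i) (p + r - i) v - (-1 : ℂ) ^ r • TId (DR Δ (p + i) (q + r - i) v)) :=
    finsum_eq_range _ _ (fun i hi => by
      simp [hDR _ _ (hle i hi).1, hDR _ _ (hle i hi).2])
  have eB : Hsum Δ p q r v
      = ∑ i ∈ Finset.range M, ((-1 : ℂ) ^ i * cbin r i) • DR Δ (q + i) (p + r - i) v :=
    finsum_eq_range _ _ (fun i hi => by simp [hDR _ _ (hle i hi).1])
  have eC : Gsum Δ p q r v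
      = (-1 : ℂ) ^ r • ∑ i ∈ Finset.range M,
          ((-1 : ℂ) ^ i * cbin r i) • TId (DR Δ (p + i) (q + r - i) v) := by
    unfold Gsum
    rw [finsum_eq_range _ M (fun i hi => by simp [hDR _ _ (hle i hi).2])]
  rw [eA, eB, eC, Finset.smul_sum, ← Finset.sum_sub_distrib]
  apply Finset.sum_congr rfl
  intro i _
  rw [smul_sub, smul_comm]

private lemma L_rec (htr : Truncation Δ) (p q r : ℤ) (v : V) :
    Lsum Δ (p + 1) q r v = Lsum Δ p (q + 1) r v + Lsum Δ p q (r + 1) v := by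
  obtain ⟨N, hN⟩ := htr v
  have hDL : ∀ n m : ℤ, m ≤ N → DL Δ n m v = 0 := fun n m hm => by simp [DL, hN m hm]
  have h := gen_rec (fun n m => DL Δ n m v) N hDL 1 p r (p + q)
  simp only [one_pow, one_mul, one_smul] at h
  unfold Lsum
  have e1 : ∀ z : ℤ, p + 1 + q - z = p + q + 1 - z := fun z => by ring
  have e2 : ∀ z : ℤ, p + (q + 1) - z = p + q + 1 - z := fun z => by ring
  simp only [e1, e2]
  exact h

private lemma H_rec (htr : Truncation Δ) (p q r : ℤ) (v : V) :
    Hsum Δ (p + 1) q r v = Hsum Δ p (q + 1) r v + Hsum Δ p q (r + 1) v := by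
  obtain ⟨N, hN⟩ := htr v
  have hDR := hDR_zero Δ v N hN
  have h := gen_rec (fun n m => DR Δ n m v) N hDR (-1) r q (p + r)
  unfold Hsum
  have e1 : ∀ z : ℤ, p + 1 + r - z = p + r + 1 - z := fun z => by ring
  have e2 : ∀ z : ℤ, p + (r + 1) - z = p + r + 1 - z := fun z => by ring
  simp only [e1, e2]
  rw [h, neg_one_smul]
  abel

private lemma G_rec (htr : Truncation Δ) (p q r : ℤ) (v : V) :
    Gsum Δ (p + 1) q r v = Gsum Δ p (q + 1) r v + Gsum Δ p q (r + 1) v := by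
  obtain ⟨N, hN⟩ := htr v
  have hDR := hDR_zero Δ v N hN
  have hY : ∀ n m : ℤ, m ≤ N → TId (DR Δ n m v) = 0 := fun n m hm => by
    rw [hDR n m hm, map_zero]
  have h := gen_rec (fun n m => TId (DR Δ n m v)) N hY (-1) r p (q + r)
  unfold Gsum
  have e1 : ∀ z : ℤ, q + 1 + r - z = q + r + 1 - z := fun z => by ring
  have e2 : ∀ z : ℤ, q + (r + 1) - z = q + r + 1 - z := fun z => by ring
  simp only [e1, e2]
  rw [h, neg_one_smul]
  have hpow : ((-1 : ℂ)) ^ (r + 1) = -((-1 : ℂ) ^ r) := by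
    rw [zpow_add_one₀ (by norm_num : (-1 : ℂ) ≠ 0)]
    ring
  rw [hpow]
  simp only [neg_smul, smul_add, smul_neg]
  abel

private def Svec (p q r : ℤ) (v : V) : V ⊗[ℂ] (V ⊗[ℂ] V) :=
  Lsum Δ p q r v - (Hsum Δ p q r v - Gsum Δ p q r v)

private lemma S_rec (htr : Truncation Δ) (p q r : ℤ) (v : V) :
    Svec Δ (p + 1) q r v = Svec Δ p (q + 1) r v + Svec Δ p q (r + 1) v := by
  unfold Svec
  rw [L_rec Δ htr, H_rec Δ htr, G_rec Δ htr]
  abel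

private lemma coB_iff_S (htr : Truncation Δ) (p q r : ℤ) :
    CoBorcherds Δ p q r ↔ ∀ v, Svec Δ p q r v = 0 := by
  unfold CoBorcherds Svec Lsum
  constructor
  · intro h v
    rw [sub_eq_zero, ← rhs_split Δ htr p q r v]
    exact h v
  · intro h v
    rw [rhs_split Δ htr p q r v]
    exact sub_eq_zero.mp (h v)

end AuxProof

theorem coBorcherds_of_fixed_row_and_column (Δ : ℤ → V →ₗ[ℂ] V ⊗[ℂ] V)
    (htr : Truncation Δ) (r₀ p₀ : ℤ)
    (hrow : ∀ p q : ℤ, CoBorcherds Δ p q r₀)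
    (hcol : ∀ q r : ℤ, CoBorcherds Δ p₀ q r) :
    ∀ p q r : ℤ, CoBorcherds Δ p q r := by
  suffices h : ∀ r p q : ℤ, CoBorcherds Δ p q r by
    intro p q r; exact h r p q
  intro r
  refine Int.inductionOn' r r₀ (fun p q => hrow p q) ?_ ?_
  · -- upward in r
    intro k _ ih p q
    rw [coB_iff_S Δ htr]
    intro v
    have e := S_rec Δ htr p q k v
    have h1 := (coB_iff_S Δ htr (p + 1) q k).mp (ih (p + 1) q) v
    have h2 := (coB_iff_S Δ htr p (q + 1) k).mp (ih p (q + 1)) v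
    rw [h1, h2] at e
    simpa using e.symm
  · -- downward in r, inner induction on p
    intro k _ ih
    intro p
    refine Int.inductionOn' p p₀ (fun q => hcol q (k - 1)) ?_ ?_
    · intro m _ ihm q
      rw [coB_iff_S Δ htr]
      intro v
      have e := S_rec Δ htr m q (k - 1) v
      have h1 := (coB_iff_S Δ htr m (q + 1) (k - 1)).mp (ihm (q + 1)) v
      have hk : k - 1 + 1 = k := by ring
      have h2 := (coB_iff_S Δ htr m q (k - 1 + 1)).mp (by rw [hk]; exact ih m q) v
      rw [h1, h2] at e
      simpa using e
    · intro m _ ihm q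
      rw [coB_iff_S Δ htr]
      intro v
      have e := S_rec Δ htr (m - 1) (q - 1) (k - 1) v
      have hm : m - 1 + 1 = m := by ring
      have hk : k - 1 + 1 = k := by ring
      have hq : q - 1 + 1 = q := by ring
      have h1 := (coB_iff_S Δ htr (m - 1 + 1) (q - 1) (k - 1)).mp (by rw [hm]; exact ihm (q - 1)) v
      have h2 := (coB_iff_S Δ htr (m - 1) (q - 1) (k - 1 + 1)).mp (by rw [hk]; exact ih (m - 1) (q - 1)) v
      rw [h1, h2] at e
      rw [hq] at e
      simpa using e.symm


end
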